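/- arXiv:1602.00780 — 7 statements merged into one kernel-verified Lean document; each statement's English description precedes it below -/
import Mathlib

section
/- Let T and Q be real symmetric positive definite 2×2 matrices with largest eigenvalues λ_T and λ_Q respectively, and let C be an invertible real 2×2 matrix. Then the matrix T·C⁻¹·Q·C⁻ᵀ has a real eigenvalue μ with 0 < μ ≤ λ_T·λ_Q/‖C‖², where ‖C‖ denotes the operator norm of C with respect to the Euclidean norm on ℝ². -/
open Matrix

/-- For a real square matrix, `opNorm C` is the operator norm of the induced linear map
on Euclidean space (the largest singular value). -/
noncomputable def opNorm (C : Matrix (Fin 2) (Fin 2) ℝ) : ℝ :=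
  ‖Matrix.toEuclideanCLM (𝕜 := ℝ) C‖

/-- `μ` is an eigenvalue of the real matrix `M`. -/
def IsEigenvalue (M : Matrix (Fin 2) (Fin 2) ℝ) (μ : ℝ) : Prop :=
  ∃ v : Fin 2 → ℝ, v ≠ 0 ∧ M.mulVec v = μ • v

/-!
With `R = √T` and `S = C⁻¹ Q C⁻ᵀ`, the matrix `T S = R (R S R) R⁻¹` is similar to the positive
definite matrix `R S R`. Its smallest eigenvalue `μ` is therefore positive, and substituting
`x = R z` in the Rayleigh bound `μ ‖z‖² ≤ ⟪z, R S R z⟫` gives `μ ⟪x, T⁻¹ x⟫ ≤ ⟪x, S x⟫`.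
For `x = Cᵀ u` this yields
`μ ‖Cᵀ u‖² ≤ λ_T μ ⟪x, T⁻¹ x⟫ ≤ λ_T ⟪x, S x⟫ = λ_T ⟪u, Q u⟫ ≤ λ_T λ_Q ‖u‖²`,
so `μ ‖C‖² = μ ‖Cᵀ‖² ≤ λ_T λ_Q`.
-/

open scoped MatrixOrder

namespace Matrix

variable {n : Type*} [Fintype n]

theorem dotProduct_transpose_mul_mul_mulVec {R : Type*} [CommRing R] (B M : Matrix n n R)
    (x : n → R) : x ⬝ᵥ (Bᵀ * M * B) *ᵥ x = (B *ᵥ x) ⬝ᵥ M *ᵥ (B *ᵥ x) := by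
  rw [← mulVec_mulVec, ← mulVec_mulVec, dotProduct_mulVec, vecMul_transpose]

variable [DecidableEq n]

theorem spectrum_mul_mul_inv {R : Type*} [Field R] {P : Matrix n n R} (hP : IsUnit P.det)
    (A : Matrix n n R) : spectrum R (P * A * P⁻¹) = spectrum R A := by
  simpa [coe_units_inv] using
    spectrum.units_conjugate (R := R) (a := A) (u := ((isUnit_iff_isUnit_det P).2 hP).unit)

theorem mem_spectrum_iff_exists_mulVec_eq_smul {A : Matrix n n ℝ} {μ : ℝ} :
    μ ∈ spectrum ℝ A ↔ ∃ v, v ≠ 0 ∧ A *ᵥ v = μ • v := by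
  rw [← spectrum_toLin', ← Module.End.hasEigenvalue_iff_mem_spectrum]
  constructor
  · intro h
    obtain ⟨v, hv⟩ := h.exists_hasEigenvector
    exact ⟨v, hv.2, by simpa using hv.apply_eq_smul⟩
  · rintro ⟨v, hv, hAv⟩
    exact Module.End.hasEigenvalue_of_hasEigenvector
      ⟨by simpa [Module.End.mem_eigenspace_iff] using hAv, hv⟩

variable {A : Matrix n n ℝ} {c : ℝ}

theorem IsHermitian.dotProduct_mulVec_le_of_spectrum_le (hA : A.IsHermitian)
    (hc : ∀ μ ∈ spectrum ℝ A, μ ≤ c) (x : n → ℝ) : x ⬝ᵥ A *ᵥ x ≤ c * (x ⬝ᵥ x) := by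
  have hAc : (c • 1 - A).PosSemidef :=
    le_iff.1 <| by simpa [Algebra.algebraMap_eq_smul_one] using
      (le_algebraMap_iff_spectrum_le hA.isSelfAdjoint).2 hc
  simpa [sub_mulVec, smul_mulVec] using hAc.dotProduct_mulVec_nonneg x

theorem IsHermitian.le_dotProduct_mulVec_of_le_spectrum (hA : A.IsHermitian)
    (hc : ∀ μ ∈ spectrum ℝ A, c ≤ μ) (x : n → ℝ) : c * (x ⬝ᵥ x) ≤ x ⬝ᵥ A *ᵥ x := by
  have hAc : (A - c • 1).PosSemidef :=
    le_iff.1 <| by simpa [Algebra.algebraMap_eq_smul_one] using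
      (algebraMap_le_iff_le_spectrum hA.isSelfAdjoint).2 hc
  simpa [sub_mulVec, smul_mulVec] using hAc.dotProduct_mulVec_nonneg x

theorem IsHermitian.exists_mem_spectrum_forall_le_dotProduct_mulVec [Nonempty n]
    (hA : A.IsHermitian) : ∃ μ ∈ spectrum ℝ A, ∀ x, μ * (x ⬝ᵥ x) ≤ x ⬝ᵥ A *ᵥ x := by
  obtain ⟨i, -, hi⟩ := Finset.exists_min_image Finset.univ hA.eigenvalues Finset.univ_nonempty
  refine ⟨_, hA.eigenvalues_mem_spectrum_real i, hA.le_dotProduct_mulVec_of_le_spectrum ?_⟩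
  rw [hA.spectrum_real_eq_range_eigenvalues]
  rintro _ ⟨j, rfl⟩
  exact hi j (Finset.mem_univ j)

theorem PosDef.pos_of_mem_spectrum (hA : A.PosDef) {μ : ℝ} (hμ : μ ∈ spectrum ℝ A) : 0 < μ :=
  (isStrictlyPositive_iff_posDef.2 hA).spectrum_pos hμ

theorem PosDef.pos_of_forall_mem_spectrum_le [Nonempty n] (hA : A.PosDef)
    (hc : ∀ μ ∈ spectrum ℝ A, μ ≤ c) : 0 < c := by
  obtain ⟨μ, hμ, -⟩ := hA.1.exists_mem_spectrum_forall_le_dotProduct_mulVec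
  exact (hA.pos_of_mem_spectrum hμ).trans_le (hc μ hμ)

theorem PosDef.inv_mul_dotProduct_le_dotProduct_inv_mulVec (hA : A.PosDef)
    (hc : ∀ μ ∈ spectrum ℝ A, μ ≤ c) (x : n → ℝ) : c⁻¹ * (x ⬝ᵥ x) ≤ x ⬝ᵥ A⁻¹ *ᵥ x := by
  refine hA.inv.1.le_dotProduct_mulVec_of_le_spectrum (fun ν hν => ?_) x
  have hν' : ν⁻¹ ∈ spectrum ℝ A := by
    lift A to (Matrix n n ℝ)ˣ using hA.isUnit
    exact spectrum.inv₀_mem (by simpa [coe_units_inv] using hν)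
  simpa using inv_anti₀ (hA.pos_of_mem_spectrum hν') (hc _ hν')

theorem PosDef.exists_mem_spectrum_mul_le_rayleigh [Nonempty n] {T S : Matrix n n ℝ}
    (hT : T.PosDef) (hS : S.PosDef) :
    ∃ μ ∈ spectrum ℝ (T * S), 0 < μ ∧ ∀ x, μ * (x ⬝ᵥ T⁻¹ *ᵥ x) ≤ x ⬝ᵥ S *ᵥ x := by
  set R := CFC.sqrt T
  have hRR : R * R = T := CFC.sqrt_mul_sqrt_self T hT.posSemidef.nonneg
  have hRt : Rᵀ = R := by
    rw [← conjTranspose_eq_transpose_of_trivial]; exact (CFC.sqrt_nonneg T).posSemidef.1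
  have hR : IsUnit R.det := by
    refine isUnit_of_mul_isUnit_left (y := R.det) ?_
    rw [← det_mul, hRR]; exact hT.det_pos.ne'.isUnit
  have hA : (Rᵀ * S * R).PosDef := by
    simpa [conjTranspose_eq_transpose_of_trivial] using
      hS.conjTranspose_mul_mul_same (mulVec_injective_of_isUnit ((isUnit_iff_isUnit_det R).2 hR))
  obtain ⟨μ, hμ, hμx⟩ := hA.1.exists_mem_spectrum_forall_le_dotProduct_mulVec
  have hTS : T * S = R * (Rᵀ * S * R) * R⁻¹ := by
    rw [hRt, ← hRR]; simp [Matrix.mul_assoc, mul_nonsing_inv R hR]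
  refine ⟨μ, by rwa [hTS, spectrum_mul_mul_inv hR], hA.pos_of_mem_spectrum hμ, fun x => ?_⟩
  set z := R⁻¹ *ᵥ x
  have hx : R *ᵥ z = x := by rw [mulVec_mulVec, mul_nonsing_inv R hR, one_mulVec]
  have hTinv : T⁻¹ = (R⁻¹)ᵀ * 1 * R⁻¹ := by
    rw [transpose_nonsing_inv, hRt, Matrix.mul_one, ← hRR, Matrix.mul_inv_rev]
  calc μ * (x ⬝ᵥ T⁻¹ *ᵥ x) = μ * (z ⬝ᵥ z) := by
        rw [hTinv, dotProduct_transpose_mul_mul_mulVec, one_mulVec]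
    _ ≤ z ⬝ᵥ (Rᵀ * S * R) *ᵥ z := hμx z
    _ = x ⬝ᵥ S *ᵥ x := by rw [dotProduct_transpose_mul_mul_mulVec, hx]

theorem norm_toEuclideanCLM_transpose (A : Matrix n n ℝ) :
    ‖toEuclideanCLM (𝕜 := ℝ) Aᵀ‖ = ‖toEuclideanCLM (𝕜 := ℝ) A‖ := by
  rw [← conjTranspose_eq_transpose_of_trivial, ← star_eq_conjTranspose, map_star,
    ContinuousLinearMap.star_eq_adjoint]
  exact ContinuousLinearMap.adjoint.norm_map _

theorem sq_norm_toEuclideanCLM_le (hc : 0 ≤ c)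
    (h : ∀ x, (A *ᵥ x) ⬝ᵥ (A *ᵥ x) ≤ c * (x ⬝ᵥ x)) : ‖toEuclideanCLM (𝕜 := ℝ) A‖ ^ 2 ≤ c := by
  refine (Real.le_sqrt (norm_nonneg _) hc).1 <| ContinuousLinearMap.opNorm_le_bound _
    (Real.sqrt_nonneg c) fun u => ?_
  rw [← Real.sqrt_sq (norm_nonneg _), ← Real.sqrt_sq (norm_nonneg u), ← Real.sqrt_mul hc]
  refine Real.sqrt_le_sqrt ?_
  rw [EuclideanSpace.real_norm_sq_eq, EuclideanSpace.real_norm_sq_eq]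
  simpa [dotProduct, sq] using h u

theorem exists_pos_mem_spectrum_mul_sq_norm_le [Nonempty n] {T Q C : Matrix n n ℝ}
    (hT : T.PosDef) (hQ : Q.PosDef) (hC : IsUnit C.det) {lamT lamQ : ℝ}
    (hlamT : ∀ μ ∈ spectrum ℝ T, μ ≤ lamT) (hlamQ : ∀ μ ∈ spectrum ℝ Q, μ ≤ lamQ) :
    ∃ μ ∈ spectrum ℝ (T * C⁻¹ * Q * (C⁻¹)ᵀ), 0 < μ ∧
      μ * ‖toEuclideanCLM (𝕜 := ℝ) C‖ ^ 2 ≤ lamT * lamQ := by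
  have hCinvT : IsUnit (C⁻¹)ᵀ := by
    rw [isUnit_iff_isUnit_det, det_transpose]; exact isUnit_nonsing_inv_det C hC
  have hS : ((C⁻¹)ᵀᵀ * Q * (C⁻¹)ᵀ).PosDef := by
    simpa [conjTranspose_eq_transpose_of_trivial] using
      hQ.conjTranspose_mul_mul_same (mulVec_injective_of_isUnit hCinvT)
  obtain ⟨μ, hμ, hμpos, hμx⟩ := hT.exists_mem_spectrum_mul_le_rayleigh hS
  have hlamT0 : 0 < lamT := hT.pos_of_forall_mem_spectrum_le hlamT
  have hlamQ0 : 0 < lamQ := hQ.pos_of_forall_mem_spectrum_le hlamQ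
  refine ⟨μ, by simpa only [transpose_transpose, Matrix.mul_assoc] using hμ, hμpos, ?_⟩
  rw [← norm_toEuclideanCLM_transpose, ← le_div_iff₀' hμpos]
  refine sq_norm_toEuclideanCLM_le (by positivity) fun u => ?_
  set x := Cᵀ *ᵥ u
  have hx : (C⁻¹)ᵀ *ᵥ x = u := by
    rw [mulVec_mulVec, ← transpose_mul, mul_nonsing_inv C hC, transpose_one, one_mulVec]
  rw [div_mul_eq_mul_div, le_div_iff₀' hμpos]
  calc μ * (x ⬝ᵥ x) = lamT * (μ * (lamT⁻¹ * (x ⬝ᵥ x))) := by field_simp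
    _ ≤ lamT * (μ * (x ⬝ᵥ T⁻¹ *ᵥ x)) := by
        gcongr; exact hT.inv_mul_dotProduct_le_dotProduct_inv_mulVec hlamT x
    _ ≤ lamT * (x ⬝ᵥ ((C⁻¹)ᵀᵀ * Q * (C⁻¹)ᵀ) *ᵥ x) := by gcongr; exact hμx x
    _ = lamT * (u ⬝ᵥ Q *ᵥ u) := by rw [dotProduct_transpose_mul_mul_mulVec, hx]
    _ ≤ lamT * (lamQ * (u ⬝ᵥ u)) := by
        gcongr; exact hQ.1.dotProduct_mulVec_le_of_spectrum_le hlamQ u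
    _ = lamT * lamQ * (u ⬝ᵥ u) := by ring

end Matrix

theorem smallest_eigenvalue_bound_general
    (T Q C : Matrix (Fin 2) (Fin 2) ℝ)
    (hTpos : T.PosDef)
    (hQpos : Q.PosDef)
    (hC : IsUnit C.det)
    (lamT lamQ : ℝ)
    (hlamTmax : ∀ μ, IsEigenvalue T μ → μ ≤ lamT)
    (hlamQmax : ∀ μ, IsEigenvalue Q μ → μ ≤ lamQ) :
    ∃ μ : ℝ, IsEigenvalue (T * C⁻¹ * Q * (C⁻¹)ᵀ) μ ∧
      0 < μ ∧ μ ≤ lamT * lamQ / (opNorm C)^2 := by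
  obtain ⟨μ, hμ, hμpos, hμle⟩ := exists_pos_mem_spectrum_mul_sq_norm_le hTpos hQpos hC
    (fun μ h => hlamTmax μ (mem_spectrum_iff_exists_mulVec_eq_smul.1 h))
    (fun μ h => hlamQmax μ (mem_spectrum_iff_exists_mulVec_eq_smul.1 h))
  have hC0 : 0 < opNorm C := by
    refine norm_pos_iff.2 ((map_ne_zero_iff _ (toEuclideanCLM (𝕜 := ℝ)).injective).2 ?_)
    rintro rfl
    simp at hC
  exact ⟨μ, mem_spectrum_iff_exists_mulVec_eq_smul.1 hμ, hμpos,
    (le_div_iff₀ (by positivity)).2 hμle⟩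

theorem smallest_eigenvalue_bound
    (T Q C : Matrix (Fin 2) (Fin 2) ℝ)
    (hT : T.IsSymm) (hTpos : T.PosDef)
    (hQ : Q.IsSymm) (hQpos : Q.PosDef)
    (hC : IsUnit C.det)
    (lamT lamQ : ℝ)
    (hlamT : IsEigenvalue T lamT) (hlamTmax : ∀ μ, IsEigenvalue T μ → μ ≤ lamT)
    (hlamQ : IsEigenvalue Q lamQ) (hlamQmax : ∀ μ, IsEigenvalue Q μ → μ ≤ lamQ) :
    ∃ μ : ℝ, IsEigenvalue (T * C⁻¹ * Q * (C⁻¹)ᵀ) μ ∧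
      0 < μ ∧ μ ≤ lamT * lamQ / (opNorm C)^2 :=
  smallest_eigenvalue_bound_general T Q C hTpos hQpos hC lamT lamQ hlamTmax hlamQmax
end

section
/- Let C ∈ GO₂(ℤ) and let A, D be 2×2 integer matrices. Then there exists a 2×2 integer matrix B such that the 4×4 block matrix (A B; C D) lies in Sp₄(ℤ) if and only if AᵀC and C·Dᵀ are symmetric and every entry of the matrix C·(AᵀD − I₂) is divisible by |det C|. -/
open Matrix

/-- `GO₂(ℤ)`: nonzero integer matrices of the form `((x, y), (−y, x))` or `((x, y), (y, −x))`. -/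
def GO2 (C : Matrix (Fin 2) (Fin 2) ℤ) : Prop :=
  ∃ x y : ℤ, ¬(x = 0 ∧ y = 0) ∧ (C = !![x, y; -y, x] ∨ C = !![x, y; y, -x])

/-- Membership in `Sp₄(ℤ)`: `MᵀJM = J` with `J = ((0, I₂), (−I₂, 0))`. -/
def IsSp4 (M : Matrix (Fin 2 ⊕ Fin 2) (Fin 2 ⊕ Fin 2) ℤ) : Prop :=
  Mᵀ * fromBlocks (0 : Matrix (Fin 2) (Fin 2) ℤ) 1 (-1) 0 * M = fromBlocks 0 1 (-1) 0

lemma sp4_iff (A B C D : Matrix (Fin 2) (Fin 2) ℤ) :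
    IsSp4 (fromBlocks A B C D) ↔
      Aᵀ * C = Cᵀ * A ∧ Bᵀ * D = Dᵀ * B ∧ Aᵀ * D - Cᵀ * B = 1 := by
  unfold IsSp4
  rw [fromBlocks_transpose, fromBlocks_multiply, fromBlocks_multiply, fromBlocks_inj]
  simp only [Matrix.mul_zero, Matrix.mul_one, Matrix.mul_neg, Matrix.neg_mul,
    zero_add, add_zero, neg_add_eq_sub, sub_eq_zero]
  constructor
  · rintro ⟨h1, h2, h3, h4⟩
    exact ⟨h1, h4, h2⟩
  · rintro ⟨h1, h2, h3⟩
    have h3' : Dᵀ * A - Bᵀ * C = 1 := by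
      have := congrArg Matrix.transpose h3
      simpa [Matrix.transpose_sub, Matrix.transpose_mul] using this
    refine ⟨h1, h3, ?_, h2⟩
    rw [← neg_sub, h3']

lemma transpose2 (a b c d : ℤ) : !![a, b; c, d]ᵀ = !![a, c; b, d] := by
  ext i j; fin_cases i <;> fin_cases j <;> rfl

lemma smul_one2 (n : ℤ) : n • (1 : Matrix (Fin 2) (Fin 2) ℤ) = !![n, 0; n * 0, n] := by
  ext i j; fin_cases i <;> fin_cases j <;> simp [Matrix.one_apply]

lemma go2_facts {C : Matrix (Fin 2) (Fin 2) ℤ} (hC : GO2 C) :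
    ∃ n : ℤ, n ≠ 0 ∧ |C.det| = n ∧ C * Cᵀ = n • (1 : Matrix (Fin 2) (Fin 2) ℤ) ∧
      Cᵀ * C = n • (1 : Matrix (Fin 2) (Fin 2) ℤ) := by
  obtain ⟨x, y, hxy, hform⟩ := hC
  refine ⟨x ^ 2 + y ^ 2, ?_, ?_, ?_, ?_⟩
  · intro h
    exact hxy ⟨by nlinarith [sq_nonneg x, sq_nonneg y], by nlinarith [sq_nonneg x, sq_nonneg y]⟩
  · rcases hform with h | h <;> subst h <;> rw [Matrix.det_fin_two_of]
    · rw [show x * x - y * -y = x ^ 2 + y ^ 2 by ring, abs_of_nonneg (by positivity)]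
    · rw [show x * -x - y * y = -(x ^ 2 + y ^ 2) by ring, abs_neg,
        abs_of_nonneg (by positivity : (0:ℤ) ≤ x ^ 2 + y ^ 2)]
  · rcases hform with h | h <;> subst h <;>
      rw [transpose2, Matrix.mul_fin_two, smul_one2] <;> congr 1 <;> ring_nf
  · rcases hform with h | h <;> subst h <;>
      rw [transpose2, Matrix.mul_fin_two, smul_one2] <;> congr 1 <;> ring_nf

theorem completion_to_symplectic_criterion
    (A C D : Matrix (Fin 2) (Fin 2) ℤ) (hC : GO2 C) :
    (∃ B : Matrix (Fin 2) (Fin 2) ℤ, IsSp4 (fromBlocks A B C D)) ↔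
      (Aᵀ * C).IsSymm ∧ (C * Dᵀ).IsSymm ∧
        ∀ i j, |C.det| ∣ (C * (Aᵀ * D - 1)) i j := by
  obtain ⟨n, hn, hdet, hCCt, hCtC⟩ := go2_facts hC
  have cancel : ∀ X Y : Matrix (Fin 2) (Fin 2) ℤ, n • X = n • Y → X = Y := by
    intro X Y h; ext i j
    have := congrFun (congrFun h i) j
    simp only [Matrix.smul_apply, smul_eq_mul] at this
    exact mul_left_cancel₀ hn this
  rw [hdet]
  constructor
  · rintro ⟨B, hB⟩
    rw [sp4_iff] at hB
    obtain ⟨h1, h2, h3⟩ := hB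
    have hsym1 : (Aᵀ * C).IsSymm := by
      rw [Matrix.IsSymm, Matrix.transpose_mul, Matrix.transpose_transpose]; exact h1.symm
    have h3' : Dᵀ * A - Bᵀ * C = 1 := by
      have := congrArg Matrix.transpose h3
      simpa [Matrix.transpose_sub, Matrix.transpose_mul] using this
    have hNM : fromBlocks Dᵀ (-Bᵀ) (-Cᵀ) Aᵀ * fromBlocks A B C D = 1 := by
      rw [fromBlocks_multiply, ← fromBlocks_one, fromBlocks_inj]
      refine ⟨?_, ?_, ?_, ?_⟩
      · rw [Matrix.neg_mul, ← sub_eq_add_neg]; exact h3'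
      · rw [Matrix.neg_mul, ← sub_eq_add_neg, h2, sub_self]
      · rw [Matrix.neg_mul, neg_add_eq_sub, sub_eq_zero]; exact h1
      · rw [Matrix.neg_mul, neg_add_eq_sub]; exact h3
    have hMN := mul_eq_one_comm.mp hNM
    rw [fromBlocks_multiply, ← fromBlocks_one] at hMN
    have h21 := congrArg Matrix.toBlocks₂₁ hMN
    simp only [Matrix.toBlocks_fromBlocks₂₁] at h21
    -- h21 : C * Dᵀ + D * (-Cᵀ) = 0
    have hCD : C * Dᵀ = D * Cᵀ := by
      rw [Matrix.mul_neg, ← sub_eq_add_neg, sub_eq_zero] at h21; exact h21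
    have hsym2 : (C * Dᵀ).IsSymm := by
      rw [Matrix.IsSymm, Matrix.transpose_mul, Matrix.transpose_transpose]; exact hCD.symm
    refine ⟨hsym1, hsym2, ?_⟩
    intro i j
    have hE : C * (Aᵀ * D - 1) = n • B := by
      have h4 : Aᵀ * D - 1 = Cᵀ * B := by rw [← h3]; abel
      rw [h4, ← Matrix.mul_assoc, hCCt, Matrix.smul_mul, Matrix.one_mul]
    rw [hE]
    exact ⟨B i j, by simp [Matrix.smul_apply]⟩
  · rintro ⟨hs1, hs2, hdvd⟩
    have h1 : Aᵀ * C = Cᵀ * A := by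
      have := hs1
      rw [Matrix.IsSymm, Matrix.transpose_mul, Matrix.transpose_transpose] at this
      exact this.symm
    have h2 : C * Dᵀ = D * Cᵀ := by
      have := hs2
      rw [Matrix.IsSymm, Matrix.transpose_mul, Matrix.transpose_transpose] at this
      exact this.symm
    have hACt : C * Aᵀ = A * Cᵀ := by
      apply cancel
      calc n • (C * Aᵀ) = C * Aᵀ * (n • (1 : Matrix (Fin 2) (Fin 2) ℤ)) := by
            rw [Matrix.mul_smul, Matrix.mul_one]
        _ = C * Aᵀ * (C * Cᵀ) := by rw [hCCt]
        _ = C * (Aᵀ * C) * Cᵀ := by simp only [Matrix.mul_assoc]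
        _ = C * (Cᵀ * A) * Cᵀ := by rw [h1]
        _ = (C * Cᵀ) * (A * Cᵀ) := by simp only [Matrix.mul_assoc]
        _ = n • (A * Cᵀ) := by rw [hCCt, Matrix.smul_mul, Matrix.one_mul]
    have hCtD : Cᵀ * D = Dᵀ * C := by
      refine (cancel _ _ ?_).symm
      calc n • (Dᵀ * C) = (Cᵀ * C) * (Dᵀ * C) := by rw [hCtC, Matrix.smul_mul, Matrix.one_mul]
        _ = Cᵀ * (C * Dᵀ) * C := by simp only [Matrix.mul_assoc]
        _ = Cᵀ * (D * Cᵀ) * C := by rw [h2]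
        _ = Cᵀ * D * (Cᵀ * C) := by simp only [Matrix.mul_assoc]
        _ = n • (Cᵀ * D) := by rw [hCtC, Matrix.mul_smul, Matrix.mul_one]
    obtain ⟨B, hB⟩ : ∃ B : Matrix (Fin 2) (Fin 2) ℤ, n • B = C * (Aᵀ * D - 1) := by
      refine ⟨Matrix.of fun i j => (C * (Aᵀ * D - 1)) i j / n, ?_⟩
      ext i j
      simp only [Matrix.smul_apply, Matrix.of_apply, smul_eq_mul]
      exact Int.mul_ediv_cancel' (hdvd i j)
    refine ⟨B, ?_⟩
    rw [sp4_iff]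
    have hBt : n • Bᵀ = (Aᵀ * D - 1)ᵀ * Cᵀ := by
      rw [← Matrix.transpose_smul, hB, Matrix.transpose_mul]
    have hBt' : n • Bᵀ = (Dᵀ * A - 1) * Cᵀ := by
      rw [hBt, Matrix.transpose_sub, Matrix.transpose_mul, Matrix.transpose_transpose,
        Matrix.transpose_one]
    refine ⟨h1, ?_, ?_⟩
    · apply cancel
      have key : ((Dᵀ * A - 1) * Cᵀ) * D = (Dᵀ * C) * (Aᵀ * D - 1) := by
        rw [Matrix.sub_mul, Matrix.sub_mul, Matrix.mul_sub, Matrix.one_mul, Matrix.mul_one, hCtD]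
        congr 1
        calc ((Dᵀ * A) * Cᵀ) * D = Dᵀ * ((A * Cᵀ) * D) := by simp only [Matrix.mul_assoc]
          _ = Dᵀ * ((C * Aᵀ) * D) := by rw [← hACt]
          _ = (Dᵀ * C) * (Aᵀ * D) := by simp only [Matrix.mul_assoc]
      calc n • (Bᵀ * D) = (n • Bᵀ) * D := by rw [Matrix.smul_mul]
        _ = ((Dᵀ * A - 1) * Cᵀ) * D := by rw [hBt']
        _ = (Dᵀ * C) * (Aᵀ * D - 1) := key
        _ = Dᵀ * (C * (Aᵀ * D - 1)) := by simp only [Matrix.mul_assoc]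
        _ = Dᵀ * (n • B) := by rw [hB]
        _ = n • (Dᵀ * B) := by rw [Matrix.mul_smul]
    · apply cancel
      calc n • (Aᵀ * D - Cᵀ * B) = n • (Aᵀ * D) - Cᵀ * (n • B) := by
            rw [smul_sub, Matrix.mul_smul]
        _ = n • (Aᵀ * D) - (Cᵀ * C) * (Aᵀ * D - 1) := by rw [hB, Matrix.mul_assoc]
        _ = n • (Aᵀ * D) - n • (Aᵀ * D - 1) := by rw [hCtC, Matrix.smul_mul, Matrix.one_mul]
        _ = n • (1 : Matrix (Fin 2) (Fin 2) ℤ) := by rw [← smul_sub]; congr 1; abel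
end

section
/- Let a, b be coprime integers, let d be a positive integer, and let c₁, c₂, a₁, a₂, d₁, d₂ be integers. Set A = ((a₁, a₂), (a₂ − c₁·b, −a₁ + c₁·a)) and D = ((d₁, d₂ + c₂·b), (d₂, −d₁ + c₂·a)). If every entry of AᵀD − I₂ is divisible by d, then det A is coprime to d and c₂·det A ≡ c₁ (mod d); in particular gcd(c₁, d) = gcd(c₂, d). -/
/-!
Modulo `d` the hypothesis says `Aᵀ D = 1`, so `det A · det D ≡ 1` and `det A · D ≡ (adj A)ᵀ`.
In the latter, the sum of the diagonal entries gives `a (c₂ det A - c₁) ≡ 0` and the difference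
of the off-diagonal entries gives `b (c₂ det A - c₁) ≡ 0`; as `a` and `b` are coprime,
`c₂ det A ≡ c₁`. Since `det A` is a unit modulo `d`, `c₁` and `c₂` then have the same gcd with `d`.
-/

open Matrix

namespace Matrix

variable {R : Type*} [CommRing R] {n : Type*} [Fintype n] [DecidableEq n] {A D : Matrix n n R}

theorem det_mul_det_eq_one_of_transpose_mul_eq_one (h : Aᵀ * D = 1) : A.det * D.det = 1 := by
  rw [← det_transpose A, ← det_mul, h, det_one]

theorem adjugate_transpose_eq_det_smul_of_transpose_mul_eq_one (h : Aᵀ * D = 1) :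
    (adjugate A)ᵀ = A.det • D := by
  calc (adjugate A)ᵀ = adjugate Aᵀ * (Aᵀ * D) := by rw [h, mul_one, adjugate_transpose]
    _ = A.det • D := by rw [← Matrix.mul_assoc, adjugate_mul, det_transpose, smul_one_mul]

variable {d : R}

theorem mapMatrix_mk_span_singleton_eq_iff {M N : Matrix n n R} :
    (Ideal.Quotient.mk (Ideal.span {d})).mapMatrix M =
        (Ideal.Quotient.mk (Ideal.span {d})).mapMatrix N ↔ ∀ i j, d ∣ (M - N) i j := by
  simp only [← Matrix.ext_iff, RingHom.mapMatrix_apply, map_apply,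
    Ideal.Quotient.mk_eq_mk_iff_sub_mem, Ideal.mem_span_singleton, sub_apply]

theorem mapMatrix_mk_transpose_mul_eq_one (h : ∀ i j, d ∣ (Aᵀ * D - 1) i j) :
    ((Ideal.Quotient.mk (Ideal.span {d})).mapMatrix A)ᵀ *
      (Ideal.Quotient.mk (Ideal.span {d})).mapMatrix D = 1 := by
  have := mapMatrix_mk_span_singleton_eq_iff.mpr h
  rwa [map_one, map_mul, RingHom.mapMatrix_apply, transpose_map] at this

theorem isCoprime_det_of_dvd_transpose_mul_sub_one (h : ∀ i j, d ∣ (Aᵀ * D - 1) i j) :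
    IsCoprime A.det d := by
  have hπ := det_mul_det_eq_one_of_transpose_mul_eq_one (mapMatrix_mk_transpose_mul_eq_one h)
  rw [← RingHom.map_det, ← RingHom.map_det, ← map_mul, ← map_one (Ideal.Quotient.mk _),
    Ideal.Quotient.mk_eq_mk_iff_sub_mem, Ideal.mem_span_singleton] at hπ
  obtain ⟨k, hk⟩ := hπ
  exact ⟨D.det, -k, by linear_combination hk⟩

theorem dvd_det_smul_sub_adjugate_transpose (h : ∀ i j, d ∣ (Aᵀ * D - 1) i j) :
    ∀ i j, d ∣ (A.det • D - (adjugate A)ᵀ) i j := by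
  have hπ :=
    adjugate_transpose_eq_det_smul_of_transpose_mul_eq_one (mapMatrix_mk_transpose_mul_eq_one h)
  refine mapMatrix_mk_span_singleton_eq_iff.mp ?_
  rw [← RingHom.map_det, ← RingHom.map_adjugate] at hπ
  ext i j
  simpa using congrFun₂ hπ i j |>.symm

end Matrix

theorem IsCoprime.dvd_of_dvd_mul_of_dvd_mul {R : Type*} [CommSemiring R] {a b d x : R}
    (hab : IsCoprime a b) (ha : d ∣ a * x) (hb : d ∣ b * x) : d ∣ x := by
  obtain ⟨u, v, huv⟩ := hab
  have hx : x = u * (a * x) + v * (b * x) := by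
    calc x = (u * a + v * b) * x := by rw [huv, one_mul]
      _ = u * (a * x) + v * (b * x) := by ring
  rw [hx]
  exact dvd_add (ha.mul_left u) (hb.mul_left v)

theorem Int.ModEq.gcd_eq {a b m : ℤ} (h : a ≡ b [ZMOD m]) : Int.gcd a m = Int.gcd b m := by
  rw [← Int.gcd_emod, h, Int.gcd_emod]

theorem Int.gcd_mul_right_cancel_of_isCoprime (m : ℤ) {k n : ℤ} (h : IsCoprime k n) :
    Int.gcd (m * k) n = Int.gcd m n :=
  Int.gcd_left_eq_iff.mpr fun _ hc =>
    ⟨(h.of_isCoprime_of_dvd_right hc).symm.dvd_of_dvd_mul_right, (·.mul_right k)⟩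

theorem dvd_mul_det_sub_of_dvd_det_smul_sub_adjugate_transpose {R : Type*} [CommRing R]
    {a b d c₁ c₂ a₁ a₂ d₁ d₂ : R} {A D : Matrix (Fin 2) (Fin 2) R} (hab : IsCoprime a b)
    (hA : A = !![a₁, a₂; a₂ - c₁ * b, -a₁ + c₁ * a])
    (hD : D = !![d₁, d₂ + c₂ * b; d₂, -d₁ + c₂ * a])
    (h : ∀ i j, d ∣ (A.det • D - (adjugate A)ᵀ) i j) :
    d ∣ c₂ * A.det - c₁ := by
  subst hA hD
  simp only [adjugate_fin_two_of, Fin.forall_fin_two, Matrix.sub_apply, Matrix.smul_apply,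
    transpose_apply, of_apply, cons_val', cons_val_zero, cons_val_one, empty_val',
    cons_val_fin_one, smul_eq_mul] at h
  obtain ⟨⟨h00, h01⟩, h10, h11⟩ := h
  refine hab.dvd_of_dvd_mul_of_dvd_mul ?_ ?_
  · convert dvd_add h00 h11 using 1; ring
  · convert dvd_sub h01 h10 using 1; ring

theorem congruence_relation_c1_c2_general
    (a b : ℤ) (hab : IsCoprime a b) (d : ℤ)
    (c₁ c₂ a₁ a₂ d₁ d₂ : ℤ)
    (A D : Matrix (Fin 2) (Fin 2) ℤ)
    (hA : A = !![a₁, a₂; a₂ - c₁ * b, -a₁ + c₁ * a])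
    (hD : D = !![d₁, d₂ + c₂ * b; d₂, -d₁ + c₂ * a])
    (hcong : ∀ i j, d ∣ (Aᵀ * D - 1) i j) :
    IsCoprime A.det d ∧ c₂ * A.det ≡ c₁ [ZMOD d] ∧ Int.gcd c₁ d = Int.gcd c₂ d := by
  have hcop : IsCoprime A.det d := isCoprime_det_of_dvd_transpose_mul_sub_one hcong
  have hmod : c₂ * A.det ≡ c₁ [ZMOD d] :=
    (Int.modEq_iff_dvd.mpr <| dvd_mul_det_sub_of_dvd_det_smul_sub_adjugate_transpose hab hA hD <|
      dvd_det_smul_sub_adjugate_transpose hcong).symm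
  exact ⟨hcop, hmod, hmod.gcd_eq.symm.trans (Int.gcd_mul_right_cancel_of_isCoprime c₂ hcop)⟩

theorem congruence_relation_c1_c2
    (a b : ℤ) (hab : IsCoprime a b) (d : ℤ) (hd : 0 < d)
    (c₁ c₂ a₁ a₂ d₁ d₂ : ℤ)
    (A D : Matrix (Fin 2) (Fin 2) ℤ)
    (hA : A = !![a₁, a₂; a₂ - c₁ * b, -a₁ + c₁ * a])
    (hD : D = !![d₁, d₂ + c₂ * b; d₂, -d₁ + c₂ * a])
    (hcong : ∀ i j, d ∣ (Aᵀ * D - 1) i j) :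
    IsCoprime A.det d ∧ c₂ * A.det ≡ c₁ [ZMOD d] ∧ Int.gcd c₁ d = Int.gcd c₂ d :=
  congruence_relation_c1_c2_general a b hab d c₁ c₂ a₁ a₂ d₁ d₂ A D hA hD hcong
end

section
/- Let a, b be coprime integers, let d be a positive integer, and set γ = (a² + b²)·d. Then the number of quadruples (a₁, a₂, d₁, d₂) ∈ (ℤ/γℤ)⁴ such that every entry of the matrix ((a, b), (−b, a))·(AᵀD − I₂) is zero in ℤ/γℤ, where A = ((a₁, a₂), (a₂, −a₁)) and D = ((d₁, d₂), (d₂, −d₁)), equals (a² + b²)²·φ(d·(a + bi)), where φ(d·(a + bi)) is the number of units of the quotient ring ℤ[i]/(d·(a + bi))·ℤ[i]. -/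
/-!
Identify `(ℤ/γ)²` with `ℤ[i]/(γ)` via `(u, v) ↦ u + v i`. The matrices `!![p, q; -q, p]` multiply
like the Gaussian integers `p - q i`, so the matrix condition reads `ᾱ (z w - 1) ≡ 0 mod γ` with
`ᾱ = a - b i`, `z = a₁ + a₂ i`, `w = d₁ - d₂ i`. Since `γ = ᾱ β` with `β = d (a + b i)`, this says
`z w ≡ 1 mod β`. Pairs in `ℤ[i]/(γ)` whose images in `ℤ[i]/(β)` are mutually inverse number
`φ(β) · |K|²`, where the kernel `K = (β)/(γ) ≅ ℤ[i]/(ᾱ)` is `ℤ/(a² + b²)` because `a, b` are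
coprime.
-/

open Matrix

/-- Euler's totient function on the Gaussian integers: the number of units of `ℤ[i]/γℤ[i]`. -/
noncomputable def gaussianPhi (γ : GaussianInt) : ℕ :=
  Nat.card (GaussianInt ⧸ Ideal.span ({γ} : Set GaussianInt))ˣ

theorem RingHom.card_mul_eq_one_of_surjective {R S : Type*} [Ring R] [CommRing S] {π : R →+* S}
    (hπ : Function.Surjective π) :
    Nat.card {p : R × R // π p.1 * π p.2 = 1} = Nat.card Sˣ * Nat.card (RingHom.ker π) ^ 2 := by
  let fiber (s : S) : π.toAddMonoidHom ⁻¹' {s} ≃ π.toAddMonoidHom.ker :=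
    AddMonoidHom.fiberEquivKerOfSurjective hπ s
  let unit (p : {p : R × R // π p.1 * π p.2 = 1}) : Sˣ := Units.mkOfMulEqOne _ _ p.2
  let fiberUnit (u : Sˣ) :
      {p // unit p = u} ≃ π.toAddMonoidHom ⁻¹' {↑u} × π.toAddMonoidHom ⁻¹' {↑u⁻¹} :=
    { toFun p := (⟨p.1.1.1, congrArg Units.val p.2⟩,
        ⟨p.1.1.2, congrArg (fun v : Sˣ => (↑v⁻¹ : S)) p.2⟩)
      invFun q := ⟨⟨(q.1, q.2), by
        rw [show π q.1 = u from q.1.2, show π q.2 = ↑u⁻¹ from q.2.2, Units.mul_inv]⟩,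
        Units.ext q.1.2⟩
      left_inv _ := rfl
      right_inv _ := rfl }
  let e : {p : R × R // π p.1 * π p.2 = 1} ≃ Sˣ × π.toAddMonoidHom.ker × π.toAddMonoidHom.ker :=
    (Equiv.sigmaFiberEquiv unit).symm.trans <|
      (Equiv.sigmaCongrRight fun u => (fiberUnit u).trans ((fiber u).prodCongr (fiber _))).trans
        (Equiv.sigmaEquivProd _ _)
  rw [Nat.card_congr e, Nat.card_prod, Nat.card_prod, sq]
  rfl

section QuotientSpanMul

open Ideal Ideal.Quotient

variable {D : Type*} [CommRing D] [IsDomain D] {x y z : D}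

theorem Ideal.Quotient.mk_mul_eq_zero_iff_factor_eq_zero (hx : x ≠ 0) (hxy : x * y = z)
    (h : span {z} ≤ span {y}) (t : D ⧸ span {z}) : mk _ x * t = 0 ↔ factor h t = 0 := by
  subst hxy
  obtain ⟨t, rfl⟩ := mk_surjective t
  rw [← map_mul, factor_mk, eq_zero_iff_mem, eq_zero_iff_mem, mem_span_singleton,
    mem_span_singleton, mul_dvd_mul_iff_left hx]

theorem Ideal.Quotient.card_ker_factor_span_singleton (hy : y ≠ 0) (hxy : x * y = z)
    (h : span {z} ≤ span {y}) : Nat.card (RingHom.ker (factor h)) = Nat.card (D ⧸ span {x}) := by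
  subst hxy
  let f : D →ₗ[D] D ⧸ span {x * y} := (span {x * y}).mkQ ∘ₗ LinearMap.mulLeft D y
  have hker : LinearMap.ker f = span {x} := by
    ext t
    calc t ∈ LinearMap.ker f ↔ x * y ∣ y * t :=
          (Submodule.Quotient.mk_eq_zero _).trans mem_span_singleton
      _ ↔ t ∈ span {x} := by rw [mul_comm x y, mul_dvd_mul_iff_left hy, mem_span_singleton]
  have hrange : (LinearMap.range f : Set (D ⧸ span {x * y})) = RingHom.ker (factor h) := by
    ext t
    obtain ⟨t, rfl⟩ := mk_surjective t
    simp only [SetLike.mem_coe, LinearMap.mem_range, RingHom.mem_ker, factor_mk, eq_zero_iff_mem,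
      mem_span_singleton]
    constructor
    · rintro ⟨s, hs⟩
      have hst : x * y ∣ y * s - t := mem_span_singleton.mp (Ideal.Quotient.eq.mp hs)
      simpa using (dvd_mul_right y s).sub ((dvd_mul_left y x).trans hst)
    · rintro ⟨s, rfl⟩
      exact ⟨s, rfl⟩
  calc Nat.card (RingHom.ker (factor h)) = Nat.card (LinearMap.range f) :=
        Nat.card_congr (Equiv.setCongr hrange).symm
    _ = Nat.card (D ⧸ LinearMap.ker f) := Nat.card_congr f.quotKerEquivRange.toEquiv.symm
    _ = Nat.card (D ⧸ span {x}) := by rw [hker]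

end QuotientSpanMul

theorem Matrix.fin_two_mul_transpose_mul_sub_one_eq_zero_iff {R : Type*} [CommRing R]
    (a b v₁ v₂ w₁ w₂ : R) :
    !![a, b; -b, a] * ((!![v₁, v₂; v₂, -v₁])ᵀ * !![w₁, w₂; w₂, -w₁] - 1) = 0 ↔
      a * (v₁ * w₁ + v₂ * w₂ - 1) - b * (v₁ * w₂ - v₂ * w₁) = 0 ∧
        a * (v₁ * w₂ - v₂ * w₁) + b * (v₁ * w₁ + v₂ * w₂ - 1) = 0 := by
  rw [← Matrix.ext_iff]
  simp [Fin.forall_fin_two, Matrix.mul_apply, Matrix.one_apply]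
  constructor
  · rintro ⟨⟨h₁, h₂⟩, -⟩
    exact ⟨by linear_combination h₁, by linear_combination h₂⟩
  · rintro ⟨h₁, h₂⟩
    exact ⟨⟨by linear_combination h₁, by linear_combination h₂⟩,
      by linear_combination -h₂, by linear_combination h₁⟩

namespace GaussianInt

open Ideal Ideal.Quotient

theorem card_quotient_span_of_isCoprime {a b : ℤ} (hab : IsCoprime a b) :
    Nat.card (GaussianInt ⧸ span {(⟨a, b⟩ : GaussianInt)}) = (a ^ 2 + b ^ 2).natAbs := by
  obtain ⟨u, v, huv⟩ := hab
  let φ : ℤ →+* GaussianInt ⧸ span {(⟨a, b⟩ : GaussianInt)} := (mk _).comp (Int.castRingHom _)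
  have hsurj : Function.Surjective φ := by
    intro w
    obtain ⟨⟨m, n⟩, rfl⟩ := mk_surjective w
    -- `i ≡ u b - v a` modulo `a + b i`
    refine ⟨m + n * (u * b - v * a), Ideal.Quotient.eq.mpr
      (mem_span_singleton.mpr ⟨-n * ⟨v, u⟩, ?_⟩)⟩
    ext
    · simp [Zsqrtd.re_mul]
      ring
    · simp [Zsqrtd.im_mul]
      linear_combination n * huv
  have hker : RingHom.ker φ = span {a ^ 2 + b ^ 2} := by
    have hnorm : (⟨a, b⟩ * star ⟨a, b⟩ : GaussianInt) = ((a ^ 2 + b ^ 2 : ℤ) : GaussianInt) := by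
      rw [Zsqrtd.mul_star]; push_cast; ring
    ext k
    rw [RingHom.mem_ker, RingHom.comp_apply, eq_zero_iff_mem, mem_span_singleton,
      mem_span_singleton]
    constructor
    · rintro ⟨w, hw⟩
      have hdvd : ((a ^ 2 + b ^ 2 : ℤ) : GaussianInt) ∣ ⟨k * a, k * -b⟩ :=
        ⟨w, by
          rw [← Zsqrtd.smul_val, ← Zsqrtd.star_mk, ← hnorm, mul_right_comm]
          exact congrArg (· * _) hw⟩
      obtain ⟨hre, him⟩ := (Zsqrtd.intCast_dvd _ _).mp hdvd
      rw [show k = u * (k * a) - v * (k * -b) by linear_combination -k * huv]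
      exact (hre.mul_left u).sub (him.mul_left v)
    · rintro ⟨w, rfl⟩
      exact ⟨star ⟨a, b⟩ * w, by rw [← mul_assoc, hnorm, eq_intCast, Int.cast_mul]⟩
  calc Nat.card (GaussianInt ⧸ span {(⟨a, b⟩ : GaussianInt)})
      = Nat.card (ℤ ⧸ RingHom.ker φ) :=
        Nat.card_congr (RingHom.quotientKerEquivOfSurjective hsurj).toEquiv.symm
    _ = Nat.card (ZMod (a ^ 2 + b ^ 2).natAbs) := by
        rw [hker]; exact Nat.card_congr (Int.quotientSpanEquivZMod _).toEquiv
    _ = (a ^ 2 + b ^ 2).natAbs := Nat.card_zmod _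

variable (n : ℕ)

instance : CharP (GaussianInt ⧸ span {(n : GaussianInt)}) n where
  cast_eq_zero_iff k := by
    rw [← map_natCast (mk _), eq_zero_iff_mem, mem_span_singleton, ← Int.cast_natCast n,
      ← Int.cast_natCast k, Zsqrtd.intCast_dvd_intCast, Int.natCast_dvd_natCast]

noncomputable def ofZModPair (p : ZMod n × ZMod n) : GaussianInt ⧸ span {(n : GaussianInt)} :=
  ZMod.castHom dvd_rfl _ p.1 + ZMod.castHom dvd_rfl _ p.2 * mk _ ⟨0, 1⟩

theorem ofZModPair_intCast (p q : ℤ) : ofZModPair n (p, q) = mk _ ⟨p, q⟩ := by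
  have hpq : (⟨p, q⟩ : GaussianInt) = p + q * ⟨0, 1⟩ := by ext <;> simp
  rw [hpq, map_add, map_mul, map_intCast, map_intCast, ofZModPair, map_intCast, map_intCast]

theorem ofZModPair_bijective : Function.Bijective (ofZModPair n) := by
  constructor
  · rintro ⟨u, v⟩ ⟨u', v'⟩ h
    obtain ⟨p, rfl⟩ := ZMod.intCast_surjective u
    obtain ⟨q, rfl⟩ := ZMod.intCast_surjective v
    obtain ⟨p', rfl⟩ := ZMod.intCast_surjective u'
    obtain ⟨q', rfl⟩ := ZMod.intCast_surjective v'
    rw [ofZModPair_intCast, ofZModPair_intCast, Ideal.Quotient.eq, mem_span_singleton] at h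
    obtain ⟨hre, him⟩ := (Zsqrtd.intCast_dvd n _).mp (by exact_mod_cast h)
    simp only [Prod.mk.injEq, ZMod.intCast_eq_intCast_iff_dvd_sub]
    exact ⟨by simpa using hre.neg_right, by simpa using him.neg_right⟩
  · intro w
    obtain ⟨⟨p, q⟩, rfl⟩ := mk_surjective w
    exact ⟨(p, q), ofZModPair_intCast n p q⟩

theorem fin_two_matrix_eq_zero_iff_mk_mul_eq_zero (a b : ℤ) (v₁ v₂ w₁ w₂ : ZMod n) :
    !![(a : ZMod n), (b : ZMod n); -(b : ZMod n), (a : ZMod n)] *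
        ((!![v₁, v₂; v₂, -v₁])ᵀ * !![w₁, w₂; w₂, -w₁] - 1) = 0 ↔
      mk _ ⟨a, -b⟩ * (ofZModPair n (v₁, v₂) * ofZModPair n (w₁, -w₂) - 1) = 0 := by
  set j := mk (span {(n : GaussianInt)}) ⟨0, 1⟩
  set ι := ZMod.castHom (dvd_refl n) (GaussianInt ⧸ span {(n : GaussianInt)})
  have hj : j ^ 2 = -1 := by
    rw [← map_pow, ← map_one (mk _), ← map_neg]
    congr 1
  have hα : mk (span {(n : GaussianInt)}) ⟨a, -b⟩ = a - b * j := by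
    rw [← map_intCast (mk (span {(n : GaussianInt)})),
      ← map_intCast (mk (span {(n : GaussianInt)})), ← map_mul, ← map_sub]
    congr 1
    ext <;> simp
  rw [Matrix.fin_two_mul_transpose_mul_sub_one_eq_zero_iff, ← neg_eq_zero (a := _ + _),
    ← Prod.mk_eq_zero, ← (ofZModPair_bijective n).1.eq_iff' (show ofZModPair n 0 = 0 by
      simp [ofZModPair])]
  convert Iff.rfl using 2
  simp only [ofZModPair, map_add, map_sub, map_mul, map_neg, map_one, map_intCast, hα]
  linear_combination (b * (ι v₁ * ι w₂ - ι v₂ * ι w₁) - ι v₂ * ι w₂ * (a - b * j)) * hj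

theorem card_fin_two_matrix_eq_zero (a b : ℤ) :
    Nat.card {v : ZMod n × ZMod n × ZMod n × ZMod n //
        !![(a : ZMod n), (b : ZMod n); -(b : ZMod n), (a : ZMod n)] *
          ((!![v.1, v.2.1; v.2.1, -v.1])ᵀ * !![v.2.2.1, v.2.2.2; v.2.2.2, -v.2.2.1] - 1) = 0} =
      Nat.card {p : (GaussianInt ⧸ span {(n : GaussianInt)}) ×
          (GaussianInt ⧸ span {(n : GaussianInt)}) // mk _ ⟨a, -b⟩ * (p.1 * p.2 - 1) = 0} := by
  let Φ := Equiv.ofBijective _ (ofZModPair_bijective n)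
  let e : ZMod n × ZMod n × ZMod n × ZMod n ≃ _ := (Equiv.prodAssoc _ _ _).symm.trans <|
    Φ.prodCongr (((Equiv.refl _).prodCongr (Equiv.neg _)).trans Φ)
  exact Nat.card_congr <| e.subtypeEquiv fun ⟨v₁, v₂, w₁, w₂⟩ =>
    fin_two_matrix_eq_zero_iff_mk_mul_eq_zero n a b v₁ v₂ w₁ w₂

end GaussianInt

open Ideal in
theorem count_symplectic_pairs
    (a b : ℤ) (hab : IsCoprime a b) (d : ℤ) (hd : 0 < d)
    (γ : ℕ) (hγ : (γ : ℤ) = (a ^ 2 + b ^ 2) * d) :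
    (Nat.card {v : ZMod γ × ZMod γ × ZMod γ × ZMod γ //
        (!![(a : ZMod γ), (b : ZMod γ); -(b : ZMod γ), (a : ZMod γ)] *
          ((!![v.1, v.2.1; v.2.1, -v.1])ᵀ * !![v.2.2.1, v.2.2.2; v.2.2.2, -v.2.2.1]
            - 1) = 0)} : ℤ) =
      (a ^ 2 + b ^ 2) ^ 2 * gaussianPhi ⟨d * a, d * b⟩ := by
  set α : GaussianInt := ⟨a, -b⟩
  set β : GaussianInt := ⟨d * a, d * b⟩
  have hαβ : α * β = γ := by
    ext <;> simp [α, β, Zsqrtd.re_mul, Zsqrtd.im_mul]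
    · rw [hγ]; ring
    · ring
  have hα : α ≠ 0 := by
    intro h
    obtain ⟨rfl, rfl⟩ : a = 0 ∧ b = 0 := by simpa [α, Zsqrtd.ext_iff] using h
    exact not_isCoprime_zero_zero hab
  have hβ : β ≠ 0 := by
    intro h
    obtain ⟨rfl, rfl⟩ : a = 0 ∧ b = 0 := by simpa [β, Zsqrtd.ext_iff, hd.ne'] using h
    exact not_isCoprime_zero_zero hab
  have hle : span {(γ : GaussianInt)} ≤ span {β} :=
    span_singleton_le_span_singleton.mpr (Dvd.intro_left _ hαβ)
  let π := Quotient.factor hle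
  rw [GaussianInt.card_fin_two_matrix_eq_zero,
    Nat.card_congr (Equiv.subtypeEquivRight (q := fun p => π p.1 * π p.2 = 1) fun p => by
      rw [Quotient.mk_mul_eq_zero_iff_factor_eq_zero hα hαβ hle, map_sub, map_mul, map_one,
        sub_eq_zero]),
    RingHom.card_mul_eq_one_of_surjective (Quotient.factor_surjective hle),
    Quotient.card_ker_factor_span_singleton hβ hαβ,
    GaussianInt.card_quotient_span_of_isCoprime hab.neg_right]
  push_cast
  rw [abs_of_nonneg (by positivity), neg_sq, gaussianPhi]
  ring
end

section
/- Let c be a nonzero Gaussian integer and let n be a positive integer such that c divides n in ℤ[i]. Then the number of pairs (α, δ) in (ℤ[i]/nℤ[i])² such that c divides αδ − 1 in ℤ[i] (a condition well defined on residues mod n) equals φ(c)·(n²/N(c))². -/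
/-!
Reduction mod `c` is a surjective ring map `f : ℤ[i]/(n) → ℤ[i]/(c)`, and the pairs to be counted
are those with `f α * f δ = 1`. Such pairs lie over the `φ(c)` pairs `(u, u⁻¹)` of `ℤ[i]/(c)`, and
every fibre of `f × f` is a coset of `ker f × ker f`. Comparing cardinalities,
`|ker f| = n² / N(c)`, since `|ℤ[i]/(γ)| = N(γ)`.
-/

open Ideal

theorem AddMonoidHom.natCard_preimage_eq_mul_natCard_ker {G H : Type*} [AddGroup G]
    [AddGroup H] (f : G →+ H) (hf : Function.Surjective f) (S : Set H) :
    Nat.card (f ⁻¹' S) = Nat.card S * Nat.card f.ker := by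
  let σ := Function.surjInv hf
  have hσ : ∀ h, f (σ h) = h := Function.surjInv_eq hf
  let e : f ⁻¹' S ≃ S × f.ker :=
    { toFun a := (⟨f a, a.2⟩, ⟨a - σ (f a), by simp [hσ]⟩)
      invFun p := ⟨p.2 + σ p.1, by simp [hσ, f.mem_ker.1 p.2.2]⟩
      left_inv a := by simp
      right_inv p := by ext <;> simp [hσ, f.mem_ker.1 p.2.2] }
  rw [Nat.card_congr e, Nat.card_prod, mul_comm]

theorem AddMonoidHom.natCard_eq_mul_natCard_ker {G H : Type*} [AddGroup G] [AddGroup H]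
    (f : G →+ H) (hf : Function.Surjective f) :
    Nat.card G = Nat.card H * Nat.card f.ker := by
  simpa using f.natCard_preimage_eq_mul_natCard_ker hf Set.univ

theorem RingHom.natCard_mul_eq_one {A B : Type*} [CommRing A] [CommRing B] (f : A →+* B)
    (hf : Function.Surjective f) :
    Nat.card {p : A × A // f p.1 * f p.2 = 1} = Nat.card Bˣ * Nat.card (RingHom.ker f) ^ 2 := by
  let g := (f : A →+ B).prodMap (f : A →+ B)
  have hg : Function.Surjective g := Prod.map_surjective.2 ⟨hf, hf⟩
  have hker : Nat.card g.ker = Nat.card (RingHom.ker f) ^ 2 := by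
    rw [AddMonoidHom.ker_prodMap, Nat.card_congr (AddSubgroup.prodEquiv _ _).toEquiv,
      Nat.card_prod, sq]
    rfl
  have hunits : Nat.card {q : B × B | q.1 * q.2 = 1} = Nat.card Bˣ :=
    Nat.card_congr ((unitsEquivProdSubtype B).trans
      (Equiv.subtypeEquivRight fun q => by simp [mul_comm q.2])).symm
  rw [← hunits, ← hker, ← g.natCard_preimage_eq_mul_natCard_ker hg]
  rfl

theorem Ideal.Quotient.exists_mk_eq_dvd_sub_one_iff {R : Type*} [CommRing R] {I : Ideal R}
    {c : R} (hI : I ≤ span {c}) (p : (R ⧸ I) × (R ⧸ I)) :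
    (∃ x y : R, mk I x = p.1 ∧ mk I y = p.2 ∧ c ∣ x * y - 1) ↔
      factor hI p.1 * factor hI p.2 = 1 := by
  have key (x y : R) : c ∣ x * y - 1 ↔ factor hI (mk I x) * factor hI (mk I y) = 1 := by
    rw [factor_mk, factor_mk, ← map_mul, ← map_one (mk _), Quotient.eq, mem_span_singleton]
  obtain ⟨⟨x, y⟩, rfl⟩ := (mk_surjective.prodMap mk_surjective) p
  constructor
  · rintro ⟨x', y', hx, hy, hdvd⟩
    rwa [← hx, ← hy, ← key]
  · exact fun h => ⟨x, y, rfl, rfl, (key x y).2 h⟩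

theorem QuadraticAlgebra.algebraNorm_eq_norm {R : Type*} [CommRing R] {a b : R}
    (z : QuadraticAlgebra R a b) : Algebra.norm R z = z.norm := by
  rw [Algebra.norm_apply, ← det_toLinearMap_eq_norm]
  rfl

namespace GaussianInt

/-- Transporting along this equivalence gives `ℤ[i]` its `ℤ`-basis and identifies `Algebra.norm`
with `Zsqrtd.norm`. -/
def equivQuadraticAlgebra : GaussianInt ≃+* QuadraticAlgebra ℤ (-1) 0 where
  toFun z := ⟨z.re, z.im⟩
  invFun z := ⟨z.re, z.im⟩
  left_inv _ := rfl
  right_inv _ := rfl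
  map_mul' z w := by ext <;> simp
  map_add' z w := by ext <;> simp

instance : Module.Free ℤ GaussianInt :=
  .of_equiv equivQuadraticAlgebra.toIntAlgEquiv.symm.toLinearEquiv

instance : Module.Finite ℤ GaussianInt :=
  .equiv equivQuadraticAlgebra.toIntAlgEquiv.symm.toLinearEquiv

theorem algebraNorm_eq_norm (z : GaussianInt) : Algebra.norm ℤ z = z.norm := by
  rw [← Algebra.norm_eq_of_algEquiv equivQuadraticAlgebra.toIntAlgEquiv,
    QuadraticAlgebra.algebraNorm_eq_norm]
  simp [QuadraticAlgebra.norm_def, Zsqrtd.norm_def, equivQuadraticAlgebra]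

theorem natCard_quotient_span_singleton (γ : GaussianInt) :
    Nat.card (GaussianInt ⧸ span {γ}) = γ.norm.natAbs := by
  rw [← Submodule.cardQuot_apply, ← absNorm_apply, absNorm_span_singleton, algebraNorm_eq_norm]

end GaussianInt

theorem count_inverse_pairs_mod_general
    (c : GaussianInt) (hc : c ≠ 0) (n : ℕ)
    (hcn : c ∣ (n : GaussianInt)) :
    (Nat.card {p : (GaussianInt ⧸ Ideal.span ({(n : GaussianInt)} : Set GaussianInt)) ×
        (GaussianInt ⧸ Ideal.span ({(n : GaussianInt)} : Set GaussianInt)) //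
        ∃ x y : GaussianInt, Ideal.Quotient.mk _ x = p.1 ∧ Ideal.Quotient.mk _ y = p.2 ∧
          c ∣ (x * y - 1)} : ℤ) =
      gaussianPhi c * ((n : ℤ) ^ 2 / c.norm) ^ 2 := by
  have hle := span_singleton_le_span_singleton.2 hcn
  have hf := Quotient.factor_surjective hle
  set k := Nat.card (RingHom.ker (Quotient.factor hle))
  have hnk : (n : ℤ) ^ 2 = c.norm * k := by
    have h : _ = _ * k := AddMonoidHom.natCard_eq_mul_natCard_ker _ hf
    rw [GaussianInt.natCard_quotient_span_singleton, GaussianInt.natCard_quotient_span_singleton,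
      Zsqrtd.norm_natCast] at h
    zify at h
    rwa [abs_mul_self, abs_of_nonneg (GaussianInt.norm_nonneg c), ← sq] at h
  rw [Nat.card_congr (Equiv.subtypeEquivRight (Quotient.exists_mk_eq_dvd_sub_one_iff hle)),
    RingHom.natCard_mul_eq_one _ hf, hnk,
    Int.mul_ediv_cancel_left _ (GaussianInt.norm_eq_zero.not.2 hc)]
  push_cast
  rfl

theorem count_inverse_pairs_mod
    (c : GaussianInt) (hc : c ≠ 0) (n : ℕ) (hn : 0 < n)
    (hcn : c ∣ (n : GaussianInt)) :
    (Nat.card {p : (GaussianInt ⧸ Ideal.span ({(n : GaussianInt)} : Set GaussianInt)) ×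
        (GaussianInt ⧸ Ideal.span ({(n : GaussianInt)} : Set GaussianInt)) //
        ∃ x y : GaussianInt, Ideal.Quotient.mk _ x = p.1 ∧ Ideal.Quotient.mk _ y = p.2 ∧
          c ∣ (x * y - 1)} : ℤ) =
      gaussianPhi c * ((n : ℤ) ^ 2 / c.norm) ^ 2 :=
  count_inverse_pairs_mod_general c hc n hcn
end

section
/- There exists a constant C > 0 such that for every real α ≥ 1, |∫₀^{π/2} exp(2πiα·sin²θ)·sinθ dθ − ((1 − i)/4)·exp(2πiα)·α^{−1/2}| ≤ C/α. -/
/-!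
Substituting `u = cos θ` turns the integral into `e^c ∫₀¹ e^{-c u²} du` with `c = 2πiα`.
For `Re b > 0` one has `∫₀^∞ e^{-b u²} du = (π/b)^{1/2}/2`, and one integration by parts, against
`-e^{-b u²}/(2 b u)`, bounds the tail `∫₁^∞ e^{-b u²} du` by `1/|b|`. Both sides of the resulting
estimate are continuous in `b`, so letting `b = c + ε` with `ε → 0⁺` gives
`|∫₀¹ e^{-c u²} du - (π/c)^{1/2}/2| ≤ 1/(2πα)`, and `(π/c)^{1/2} = (1 - i)/(2√α)`.
-/

open Real Complex MeasureTheory Set Filter Topology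

lemma intervalIntegral.integral_sin_smul_comp_cos {E : Type*} [NormedAddCommGroup E]
    [NormedSpace ℝ E] {g : ℝ → E} (hg : Continuous g) :
    ∫ θ in (0 : ℝ)..π / 2, Real.sin θ • g (Real.cos θ) = ∫ u in (0 : ℝ)..1, g u := by
  have := intervalIntegral.integral_deriv_smul_comp (a := 0) (b := π / 2)
    (fun θ _ ↦ Real.hasDerivAt_cos θ) Real.continuous_sin.neg.continuousOn hg
  simp only [Function.comp_def, neg_smul, intervalIntegral.integral_neg, Real.cos_zero,
    Real.cos_pi_div_two, intervalIntegral.integral_symm 0 1] at this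
  exact neg_injective this

section GaussianOnUnitInterval

variable {b : ℂ}

lemma norm_cexp_neg_mul_sq_le_one (hb : 0 ≤ b.re) (u : ℝ) : ‖cexp (-b * u ^ 2)‖ ≤ 1 := by
  rw [norm_exp, Real.exp_le_one_iff, ← ofReal_pow, neg_mul, neg_re, re_mul_ofReal, neg_nonpos]
  exact mul_nonneg hb (sq_nonneg u)

lemma hasDerivAt_neg_cexp_neg_mul_sq_div (hb : b ≠ 0) {u : ℝ} (hu : u ≠ 0) :
    HasDerivAt (fun u : ℝ ↦ -cexp (-b * u ^ 2) / (2 * b * u))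
      (cexp (-b * u ^ 2) + cexp (-b * u ^ 2) / (2 * b * u ^ 2)) u := by
  have hu' : (u : ℂ) ≠ 0 := ofReal_ne_zero.2 hu
  have hexp : HasDerivAt (fun u : ℝ ↦ cexp (-b * u ^ 2))
      (cexp (-b * u ^ 2) * (-b * (2 * u))) u := by
    simpa using ((hasDerivAt_pow 2 (u : ℂ)).const_mul (-b)).cexp.comp_ofReal
  have hden : HasDerivAt (fun u : ℝ ↦ 2 * b * (u : ℂ)) (2 * b) u := by
    simpa using (ofRealCLM.hasDerivAt (x := u)).const_mul (2 * b)
  refine (hexp.neg.div hden (by simp [hb, hu'])).congr_deriv ?_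
  simp only [Pi.neg_apply]
  field_simp
  ring

lemma norm_cexp_neg_mul_sq_div_le (hb : 0 ≤ b.re) {u : ℝ} (hu : 0 < u) :
    ‖cexp (-b * u ^ 2) / (2 * b * u ^ 2)‖ ≤ (2 * ‖b‖)⁻¹ * u ^ (-2 : ℝ) := by
  rw [norm_div, Real.rpow_neg hu.le, Real.rpow_two, ← mul_inv, div_eq_mul_inv]
  have : ‖2 * b * (u : ℂ) ^ 2‖ = 2 * ‖b‖ * u ^ 2 := by
    simp [← ofReal_pow, abs_of_pos hu]
  rw [this]
  exact mul_le_of_le_one_left (by positivity) (norm_cexp_neg_mul_sq_le_one hb u)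

lemma norm_setIntegral_Ioi_one_cexp_neg_mul_sq_le (hb : 0 < b.re) :
    ‖∫ u in Ioi (1 : ℝ), cexp (-b * u ^ 2)‖ ≤ 1 / ‖b‖ := by
  have hb0 : b ≠ 0 := by rintro rfl; simp at hb
  set R : ℝ → ℂ := fun u ↦ cexp (-b * u ^ 2) / (2 * b * u ^ 2)
  have hE : IntegrableOn (fun u : ℝ ↦ cexp (-b * u ^ 2)) (Ioi 1) :=
    (integrable_cexp_neg_mul_sq hb).integrableOn
  have hR_le : ∀ u ∈ Ioi (1 : ℝ), ‖R u‖ ≤ (2 * ‖b‖)⁻¹ * u ^ (-2 : ℝ) := fun u hu ↦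
    norm_cexp_neg_mul_sq_div_le hb.le (one_pos.trans hu)
  have hdom : IntegrableOn (fun u : ℝ ↦ (2 * ‖b‖)⁻¹ * u ^ (-2 : ℝ)) (Ioi 1) :=
    (integrableOn_Ioi_rpow_of_lt (by norm_num) one_pos).const_mul _
  have hR : IntegrableOn R (Ioi 1) := by
    refine hdom.mono' (ContinuousOn.aestronglyMeasurable ?_ measurableSet_Ioi)
      (ae_restrict_of_forall_mem measurableSet_Ioi hR_le)
    refine fun u hu ↦ ContinuousAt.continuousWithinAt ?_
    have : (u : ℂ) ≠ 0 := ofReal_ne_zero.2 (one_pos.trans hu).ne'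
    fun_prop (disch := simp [hb0, this])
  have hlim : Tendsto (fun u : ℝ ↦ -cexp (-b * u ^ 2) / (2 * b * u)) atTop (𝓝 0) := by
    refine squeeze_zero_norm' ?_
      (by simpa only [mul_zero] using tendsto_inv_atTop_zero.const_mul (2 * ‖b‖)⁻¹)
    filter_upwards [eventually_gt_atTop 0] with u hu
    have : ‖2 * b * (u : ℂ)‖ = 2 * ‖b‖ * u := by simp [abs_of_pos hu]
    rw [norm_div, norm_neg, this, div_eq_mul_inv, mul_inv (2 * ‖b‖) u]
    exact mul_le_of_le_one_left (by positivity) (norm_cexp_neg_mul_sq_le_one hb.le u)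
  have hparts := integral_Ioi_of_hasDerivAt_of_tendsto'
    (fun u hu ↦ hasDerivAt_neg_cexp_neg_mul_sq_div hb0 (one_pos.trans_le hu).ne') (hE.add hR) hlim
  rw [integral_add hE hR] at hparts
  have hR_int : ‖∫ u in Ioi (1 : ℝ), R u‖ ≤ (2 * ‖b‖)⁻¹ := by
    refine (norm_integral_le_of_norm_le hdom
      (ae_restrict_of_forall_mem measurableSet_Ioi hR_le)).trans ?_
    rw [integral_const_mul, integral_Ioi_rpow_of_lt (by norm_num) one_pos]
    norm_num
  have hboundary : ‖cexp (-b * (1 : ℝ) ^ 2) / (2 * b * (1 : ℝ))‖ ≤ (2 * ‖b‖)⁻¹ := by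
    simpa using norm_cexp_neg_mul_sq_div_le hb.le one_pos
  calc ‖∫ u in Ioi (1 : ℝ), cexp (-b * u ^ 2)‖
      = ‖cexp (-b * (1 : ℝ) ^ 2) / (2 * b * (1 : ℝ)) - ∫ u in Ioi (1 : ℝ), R u‖ := by
        congr 1; linear_combination hparts
    _ ≤ (2 * ‖b‖)⁻¹ + (2 * ‖b‖)⁻¹ := (norm_sub_le _ _).trans (add_le_add hboundary hR_int)
    _ = 1 / ‖b‖ := by ring

lemma norm_integral_cexp_neg_mul_sq_sub_le (hb : 0 < b.re) :
    ‖(∫ u in (0 : ℝ)..1, cexp (-b * u ^ 2)) - (π / b) ^ (1 / 2 : ℂ) / 2‖ ≤ 1 / ‖b‖ := by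
  have hint := integrable_cexp_neg_mul_sq hb
  have hsplit : ∫ u in Ioi (0 : ℝ), cexp (-b * u ^ 2) =
      (∫ u in (0 : ℝ)..1, cexp (-b * u ^ 2)) + ∫ u in Ioi (1 : ℝ), cexp (-b * u ^ 2) := by
    rw [intervalIntegral.integral_of_le zero_le_one, ← Ioc_union_Ioi_eq_Ioi zero_le_one]
    exact setIntegral_union (Ioc_disjoint_Ioi le_rfl) measurableSet_Ioi
      hint.integrableOn hint.integrableOn
  rw [← integral_gaussian_complex_Ioi hb, hsplit, sub_add_cancel_left, norm_neg]
  exact norm_setIntegral_Ioi_one_cexp_neg_mul_sq_le hb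

lemma div_mem_slitPlane_of_re_nonneg {r : ℝ} (hr : 0 < r) (hb : 0 ≤ b.re) (hb0 : b ≠ 0) :
    (r : ℂ) / b ∈ slitPlane := by
  have hn : 0 < normSq b := normSq_pos.2 hb0
  rcases hb.lt_or_eq with hre | hre
  · refine mem_slitPlane_iff.2 (Or.inl ?_)
    rw [div_re]
    simp only [ofReal_re, ofReal_im, zero_mul, zero_div, add_zero]
    positivity
  · refine mem_slitPlane_iff.2 (Or.inr ?_)
    have him : b.im ≠ 0 := fun h ↦ hb0 (Complex.ext hre.symm h)
    rw [div_im]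
    simp [hr.ne', him, hn.ne']

lemma norm_integral_cexp_neg_mul_sq_sub_le_of_re_nonneg (hb : 0 ≤ b.re) (hb0 : b ≠ 0) :
    ‖(∫ u in (0 : ℝ)..1, cexp (-b * u ^ 2)) - (π / b) ^ (1 / 2 : ℂ) / 2‖ ≤ 1 / ‖b‖ := by
  have hshift : Tendsto (fun ε : ℝ ↦ b + ε) (𝓝[>] 0) (𝓝 b) := by
    have : Continuous fun ε : ℝ ↦ b + ε := by fun_prop
    exact (this.tendsto' 0 b (by simp)).mono_left nhdsWithin_le_nhds
  have hcont_integral : Continuous fun z : ℂ ↦ ∫ u in (0 : ℝ)..1, cexp (-z * u ^ 2) :=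
    intervalIntegral.continuous_parametric_intervalIntegral_of_continuous' (by fun_prop) 0 1
  have hcont_sqrt : ContinuousAt (fun z : ℂ ↦ (π / z) ^ (1 / 2 : ℂ)) b :=
    (continuousAt_cpow_const (div_mem_slitPlane_of_re_nonneg pi_pos hb hb0)).comp
      (continuousAt_const.div continuousAt_id hb0)
  have hcont_rhs : ContinuousAt (fun z : ℂ ↦ 1 / ‖z‖) b :=
    continuousAt_const.div continuous_norm.continuousAt (norm_ne_zero_iff.2 hb0)
  refine le_of_tendsto_of_tendsto
    ((((hcont_integral.continuousAt.sub (hcont_sqrt.div_const 2)).norm).tendsto).comp hshift)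
    (hcont_rhs.tendsto.comp hshift) ?_
  filter_upwards [self_mem_nhdsWithin] with ε hε
  exact norm_integral_cexp_neg_mul_sq_sub_le (by simpa using add_pos_of_nonneg_of_pos hb hε)

end GaussianOnUnitInterval

lemma cpow_half_pi_div_two_pi_I_mul {α : ℝ} (hα : 0 < α) :
    ((π : ℂ) / (2 * π * I * α)) ^ (1 / 2 : ℂ) = (1 - I) / 2 * ((α ^ (-(1 / 2) : ℝ) : ℝ) : ℂ) := by
  have hsq : ((α ^ (-(1 / 2) : ℝ) : ℝ) : ℂ) ^ 2 = ((α⁻¹ : ℝ) : ℂ) := by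
    rw [← ofReal_pow, ← Real.rpow_natCast, ← Real.rpow_mul hα.le]
    norm_num [Real.rpow_neg_one]
  have hre : 0 < ((1 - I) / 2 * ((α ^ (-(1 / 2) : ℝ) : ℝ) : ℂ)).re := by
    rw [re_mul_ofReal]
    exact mul_pos (by norm_num) (by positivity)
  rw [← sq_cpow_two_inv hre, mul_pow, hsq, one_div]
  congr 1
  have : (π : ℂ) ≠ 0 := ofReal_ne_zero.2 pi_ne_zero
  have : (α : ℂ) ≠ 0 := ofReal_ne_zero.2 hα.ne'
  push_cast
  field_simp
  ring_nf
  simp [I_sq]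

theorem fresnel_asymptotic :
    ∃ C : ℝ, 0 < C ∧ ∀ α : ℝ, 1 ≤ α →
      ‖(∫ θ in (0:ℝ)..(π/2),
            Complex.exp (2 * π * Complex.I * α * (Real.sin θ)^2) * (Real.sin θ)) -
          ((1 - Complex.I)/4) * Complex.exp (2 * π * Complex.I * α) *
            ((α ^ (-(1/2 : ℝ)) : ℝ) : ℂ)‖ ≤ C / α := by
  refine ⟨1, one_pos, fun α hα ↦ ?_⟩
  have hα0 : 0 < α := one_pos.trans_le hα
  set c : ℂ := 2 * π * I * α with hc
  have hc_re : c.re = 0 := by simp [hc]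
  have hc_norm : ‖c‖ = 2 * π * α := by simp [hc, abs_of_pos hα0, abs_of_pos pi_pos]
  have hsubst : (∫ θ in (0 : ℝ)..π / 2, cexp (c * Real.sin θ ^ 2) * Real.sin θ) =
      cexp c * ∫ u in (0 : ℝ)..1, cexp (-c * u ^ 2) := by
    rw [← intervalIntegral.integral_const_mul, ← intervalIntegral.integral_sin_smul_comp_cos
      (g := fun u : ℝ ↦ cexp c * cexp (-c * u ^ 2)) (by fun_prop)]
    refine intervalIntegral.integral_congr fun θ _ ↦ ?_
    rw [real_smul, ← Complex.exp_add, ← ofReal_pow, Real.sin_sq]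
    push_cast
    ring_nf
  have hestimate := norm_integral_cexp_neg_mul_sq_sub_le_of_re_nonneg hc_re.ge
    (norm_ne_zero_iff.1 (hc_norm ▸ by positivity))
  rw [show (π / c) ^ (1 / 2 : ℂ) = _ from cpow_half_pi_div_two_pi_I_mul hα0, hc_norm] at hestimate
  calc _ = ‖cexp c‖ * ‖(∫ u in (0 : ℝ)..1, cexp (-c * u ^ 2)) -
          (1 - I) / 2 * ((α ^ (-(1 / 2) : ℝ) : ℝ) : ℂ) / 2‖ := by
        rw [hsubst, ← norm_mul]; congr 1; ring
    _ ≤ 1 / (2 * π * α) := by rw [norm_exp, hc_re, Real.exp_zero, one_mul]; exact hestimate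
    _ ≤ 1 / α := by gcongr; nlinarith [pi_gt_three]
end

section
/- For every σ ∈ [0, 1] there exists a constant C > 0 such that for all integers k ≥ 4 and all real t with |t| ≤ k^{1/3}, setting s = σ + it, one has |Γ(k − 1 + s)·Γ(k − 1 − s)/Γ(k − 1)² − 1| ≤ C·(1 + t²)/k. -/
/-!
Put `ν = k - 1` and `f s = Γ(ν + s) Γ(ν - s) / Γ(ν)² - 1`. This is holomorphic on `|Re s| < ν`,
even, and `f 0 = 0`, so it vanishes to second order at `0`. On the disc of radius
`m = ⌊√ν⌋` it is bounded by an absolute constant: `‖Γ s‖ ≤ Γ(Re s)`, log-convexity of `Γ` reduces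
to the real shifts `±m`, and the functional equation gives
`Γ(ν + m) Γ(ν - m) ≤ exp (m² / (ν - m)) Γ(ν)²`. The Schwarz lemma for a function vanishing to
second order then gives `‖f s‖ ≪ ‖s‖² / m² ≪ (1 + t²) / k`, provided `‖s‖ ≤ 1 + k^{1/3} < m`,
which holds once `k ≥ 17`; the finitely many smaller `k` are covered by compactness.
-/

open Complex Metric Set

theorem Function.Even.deriv_zero {𝕜 E : Type*} [NontriviallyNormedField 𝕜] [CharZero 𝕜]
    [NormedAddCommGroup E] [NormedSpace 𝕜 E] {f : 𝕜 → E} (hf : f.Even) : deriv f 0 = 0 := by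
  have h := deriv_comp_neg f (0 : 𝕜)
  rw [neg_zero, show (fun x ↦ f (-x)) = f from funext hf] at h
  have htwo : (2 : 𝕜) • deriv f 0 = 0 := by
    rw [two_smul]; nth_rewrite 1 [h]; exact neg_add_cancel _
  exact (smul_eq_zero.mp htwo).resolve_left two_ne_zero

theorem Complex.norm_le_mul_div_sq_of_even {E : Type*} [NormedAddCommGroup E] [NormedSpace ℂ E]
    {f : ℂ → E} {R M : ℝ} {z : ℂ} (heven : f.Even) (hf0 : f 0 = 0)
    (hd : DifferentiableOn ℂ f (ball 0 R)) (hmaps : MapsTo f (ball 0 R) (closedBall 0 M))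
    (hz : z ∈ ball 0 R) : ‖f z‖ ≤ M * (‖z‖ / R) ^ 2 := by
  have hR : 0 < R := nonempty_ball.mp ⟨z, hz⟩
  have hderiv : HasDerivAt f 0 0 := by
    have := (hd.differentiableAt (ball_mem_nhds 0 hR)).hasDerivAt
    rwa [heven.deriv_zero] at this
  have hlittle : (f · - f 0) =o[nhds 0] (fun w ↦ ‖w - 0‖ ^ 1) := by
    have := hasDerivAt_iff_isLittleO.mp hderiv
    simp only [sub_zero, smul_zero, pow_one] at this ⊢
    exact this.norm_right
  rw [← hf0] at hmaps
  simpa [hf0] using dist_le_mul_div_pow_of_mapsTo_ball_of_isLittleO hd hmaps hlittle hz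

theorem Complex.norm_Gamma_le_Gamma_re {s : ℂ} (hs : 0 < s.re) :
    ‖Gamma s‖ ≤ Real.Gamma s.re := by
  rw [Gamma_eq_integral hs, GammaIntegral, Real.Gamma_eq_integral hs]
  refine (MeasureTheory.norm_integral_le_integral_norm _).trans_eq ?_
  refine MeasureTheory.setIntegral_congr_fun measurableSet_Ioi fun x hx ↦ ?_
  rw [norm_mul, norm_real, norm_cpow_eq_rpow_re_of_pos hx, sub_re, one_re,
    Real.norm_of_nonneg (Real.exp_pos _).le]

theorem Complex.differentiableAt_Gamma_of_re_pos {s : ℂ} (hs : 0 < s.re) :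
    DifferentiableAt ℂ Gamma s :=
  differentiableAt_Gamma s fun m hm ↦ by
    rw [hm, neg_re, natCast_re] at hs
    exact (Nat.cast_nonneg m).not_gt (neg_pos.mp hs)

namespace Real

theorem Gamma_add_mul_Gamma_sub_le {ν x r : ℝ} (hx : |x| ≤ r) (hr : r < ν) :
    Gamma (ν + x) * Gamma (ν - x) ≤ Gamma (ν + r) * Gamma (ν - r) := by
  have hr₀ : 0 ≤ r := (abs_nonneg x).trans hx
  have hp : 0 < ν + r := by linarith
  have hm : 0 < ν - r := by linarith
  have hseg : x ∈ segment ℝ (-r) r := by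
    rw [segment_eq_Icc (by linarith)]
    exact abs_le.mp hx
  obtain ⟨a, b, ha, hb, hab, rfl⟩ := hseg
  simp only [smul_eq_mul]
  -- `ν ± x` are the two convex combinations of `ν - r` and `ν + r` with swapped weights
  have h₁ := convexOn_log_Gamma.2 (mem_Ioi.mpr hm) (mem_Ioi.mpr hp) ha hb hab
  have h₂ := convexOn_log_Gamma.2 (mem_Ioi.mpr hp) (mem_Ioi.mpr hm) ha hb hab
  simp only [smul_eq_mul, Function.comp_apply] at h₁ h₂
  rw [show a * (ν - r) + b * (ν + r) = ν + (a * -r + b * r) by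
      linear_combination ν * hab] at h₁
  rw [show a * (ν + r) + b * (ν - r) = ν - (a * -r + b * r) by
      linear_combination ν * hab] at h₂
  have hx₁ : 0 < ν + (a * -r + b * r) := by nlinarith
  have hx₂ : 0 < ν - (a * -r + b * r) := by nlinarith
  rw [← log_le_log_iff (by positivity [Gamma_pos_of_pos hx₁, Gamma_pos_of_pos hx₂])
    (mul_pos (Gamma_pos_of_pos hp) (Gamma_pos_of_pos hm)),
    log_mul (Gamma_pos_of_pos hx₁).ne' (Gamma_pos_of_pos hx₂).ne',
    log_mul (Gamma_pos_of_pos hp).ne' (Gamma_pos_of_pos hm).ne']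
  linear_combination h₁ + h₂ + (log (Gamma (ν + r)) + log (Gamma (ν - r))) * hab

theorem Gamma_add_succ_mul_Gamma_sub_succ {ν x : ℝ} (h₁ : ν + x ≠ 0) (h₂ : ν - x - 1 ≠ 0) :
    Gamma (ν + (x + 1)) * Gamma (ν - (x + 1)) =
      (ν + x) / (ν - x - 1) * (Gamma (ν + x) * Gamma (ν - x)) := by
  have e₁ : Gamma (ν + (x + 1)) = (ν + x) * Gamma (ν + x) := by
    rw [← add_assoc, Gamma_add_one h₁]
  have e₂ : Gamma (ν - x) = (ν - x - 1) * Gamma (ν - (x + 1)) := by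
    rw [sub_sub, ← Gamma_add_one (by rwa [sub_sub] at h₂)]
    ring_nf
  rw [e₁, e₂]
  field_simp

theorem Gamma_add_nat_mul_Gamma_sub_nat_le {ν : ℝ} {m : ℕ} (hm : (m : ℝ) < ν) :
    Gamma (ν + m) * Gamma (ν - m) ≤ exp (m ^ 2 / (ν - m)) * Gamma ν ^ 2 := by
  have hνm : 0 < ν - m := sub_pos.mpr hm
  suffices ∀ i ≤ m, Gamma (ν + i) * Gamma (ν - i) ≤ exp (i ^ 2 / (ν - m)) * Gamma ν ^ 2 from
    this m le_rfl
  intro i hi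
  induction i with
  | zero => simp [sq]
  | succ i ih =>
    have hi' : (i : ℝ) + 1 ≤ m := by exact_mod_cast hi
    have hfac : (ν + i) / (ν - i - 1) ≤ exp ((2 * i + 1) / (ν - m)) := calc
      (ν + i) / (ν - i - 1) = 1 + (2 * i + 1) / (ν - i - 1) := by
        field_simp [show ν - i - 1 ≠ 0 by linarith]; ring
      _ ≤ 1 + (2 * i + 1) / (ν - m) := by
        gcongr 1 + ?_
        exact div_le_div_of_nonneg_left (by positivity) hνm (by linarith)
      _ ≤ exp ((2 * i + 1) / (ν - m)) := by linarith [add_one_le_exp ((2 * i + 1) / (ν - m))]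
    push_cast
    rw [Gamma_add_succ_mul_Gamma_sub_succ (by linarith) (by linarith)]
    calc (ν + i) / (ν - i - 1) * (Gamma (ν + i) * Gamma (ν - i))
        ≤ exp ((2 * i + 1) / (ν - m)) * (exp (i ^ 2 / (ν - m)) * Gamma ν ^ 2) :=
          mul_le_mul hfac (ih (by omega)) (mul_pos (Gamma_pos_of_pos (by linarith))
            (Gamma_pos_of_pos (by linarith))).le (exp_pos _).le
      _ = exp ((i + 1) ^ 2 / (ν - m)) * Gamma ν ^ 2 := by
          rw [← mul_assoc, ← exp_add]; congr 2; field_simp; ring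

end Real

noncomputable def gammaShiftRatio (ν s : ℂ) : ℂ :=
  Gamma (ν + s) * Gamma (ν - s) / Gamma ν ^ 2

theorem gammaShiftRatio_even (ν : ℂ) : (gammaShiftRatio ν).Even := fun s ↦ by
  rw [gammaShiftRatio, gammaShiftRatio, sub_neg_eq_add, ← sub_eq_add_neg, mul_comm]

theorem gammaShiftRatio_zero {ν : ℂ} (hν : 0 < ν.re) : gammaShiftRatio ν 0 = 1 := by
  rw [gammaShiftRatio, add_zero, sub_zero, ← sq,
    div_self (pow_ne_zero 2 (Gamma_ne_zero_of_re_pos hν))]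

theorem continuousOn_gammaShiftRatio :
    ContinuousOn (fun p : ℂ × ℂ ↦ gammaShiftRatio p.1 p.2) {p | |p.2.re| < p.1.re} := by
  rintro p (hp : |p.2.re| < p.1.re)
  obtain ⟨h₁, h₂⟩ := abs_lt.mp hp
  have hΓ {s : ℂ} (hs : 0 < s.re) : ContinuousAt Gamma s :=
    (differentiableAt_Gamma_of_re_pos hs).continuousAt
  have hν : 0 < p.1.re := by linarith
  refine ContinuousAt.continuousWithinAt <|
    (((hΓ ?_).comp (by fun_prop)).mul ((hΓ ?_).comp (by fun_prop))).div
      (((hΓ hν).comp (by fun_prop)).pow 2) (pow_ne_zero 2 (Gamma_ne_zero_of_re_pos hν))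
  · rw [add_re]; linarith
  · rw [sub_re]; linarith

theorem differentiableOn_gammaShiftRatio (ν : ℂ) :
    DifferentiableOn ℂ (gammaShiftRatio ν) {s | |s.re| < ν.re} := by
  rintro s (hs : |s.re| < ν.re)
  obtain ⟨h₁, h₂⟩ := abs_lt.mp hs
  refine DifferentiableAt.differentiableWithinAt <|
    (((differentiableAt_Gamma_of_re_pos ?_).comp s (by fun_prop)).mul
      ((differentiableAt_Gamma_of_re_pos ?_).comp s (by fun_prop))).div_const _
  · rw [add_re]; linarith
  · rw [sub_re]; linarith

theorem norm_gammaShiftRatio_le {ν : ℝ} {m : ℕ} (hm : (m : ℝ) < ν) {s : ℂ} (hs : |s.re| ≤ m) :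
    ‖gammaShiftRatio ν s‖ ≤ Real.exp (m ^ 2 / (ν - m)) := by
  obtain ⟨h₁, h₂⟩ := abs_le.mp hs
  have hν : 0 < Real.Gamma ν := Real.Gamma_pos_of_pos (by linarith [m.cast_nonneg (α := ℝ)])
  have hre₁ : ((ν : ℂ) + s).re = ν + s.re := by simp
  have hre₂ : ((ν : ℂ) - s).re = ν - s.re := by simp
  have hnorm₁ := norm_Gamma_le_Gamma_re (s := ν + s) (by rw [hre₁]; linarith)
  have hnorm₂ := norm_Gamma_le_Gamma_re (s := ν - s) (by rw [hre₂]; linarith)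
  rw [hre₁] at hnorm₁
  rw [hre₂] at hnorm₂
  rw [gammaShiftRatio, norm_div, norm_mul, norm_pow, Gamma_ofReal, norm_real,
    Real.norm_of_nonneg hν.le, div_le_iff₀ (by positivity)]
  calc ‖Gamma (ν + s)‖ * ‖Gamma (ν - s)‖ ≤ Real.Gamma (ν + s.re) * Real.Gamma (ν - s.re) :=
        mul_le_mul hnorm₁ hnorm₂ (norm_nonneg _) (Real.Gamma_pos_of_pos (by linarith)).le
    _ ≤ Real.Gamma (ν + m) * Real.Gamma (ν - m) := Real.Gamma_add_mul_Gamma_sub_le hs hm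
    _ ≤ Real.exp (m ^ 2 / (ν - m)) * Real.Gamma ν ^ 2 := Real.Gamma_add_nat_mul_Gamma_sub_nat_le hm

theorem norm_gammaShiftRatio_sub_one_le {ν : ℝ} {m : ℕ} (hm : (m : ℝ) < ν) {s : ℂ}
    (hs : ‖s‖ < m) :
    ‖gammaShiftRatio ν s - 1‖ ≤ (Real.exp (m ^ 2 / (ν - m)) + 1) * (‖s‖ / m) ^ 2 := by
  have hball : ball (0 : ℂ) m ⊆ {z | |z.re| < (ν : ℂ).re} := fun z hz ↦ by
    rw [mem_ball_zero_iff] at hz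
    change |z.re| < (ν : ℂ).re
    rw [ofReal_re]
    exact (abs_re_le_norm z).trans_lt (hz.trans hm)
  refine norm_le_mul_div_sq_of_even (f := (gammaShiftRatio ν · - 1))
    (fun z ↦ congrArg (· - 1) (gammaShiftRatio_even ν z)) ?_
    (((differentiableOn_gammaShiftRatio ν).mono hball).sub_const 1) ?_ (mem_ball_zero_iff.mpr hs)
  · rw [gammaShiftRatio_zero (by rw [ofReal_re]; linarith [m.cast_nonneg (α := ℝ)]), sub_self]
  · intro z hz
    rw [mem_closedBall_zero_iff]
    have hre : |z.re| ≤ m := (abs_re_le_norm z).trans (mem_ball_zero_iff.mp hz).le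
    exact (norm_sub_le _ _).trans (by rw [norm_one]; linarith [norm_gammaShiftRatio_le hm hre])

theorem norm_gammaShiftRatio_sub_one_le_of_large {k : ℕ} (hk : 17 ≤ k) {σ t : ℝ} (hσ : |σ| ≤ 1)
    (ht : |t| ^ 3 ≤ k) :
    ‖gammaShiftRatio ((k : ℂ) - 1) (σ + t * I) - 1‖ ≤ 4 * (Real.exp 2 + 1) * (1 + t ^ 2) / k := by
  set s : ℂ := σ + t * I
  set m := Nat.sqrt (k - 1)
  have hm4 : (4 : ℝ) ≤ m := by exact_mod_cast Nat.le_sqrt'.mpr (by omega)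
  have hmk : (m : ℝ) ^ 2 ≤ k - 1 := by
    have := Nat.sqrt_le' (k - 1)
    rw [← Nat.cast_le (α := ℝ), Nat.cast_sub (by omega)] at this
    exact_mod_cast this
  have hkm : (k : ℝ) ≤ (m + 1) ^ 2 := by
    have : k - 1 < (m + 1) ^ 2 := Nat.lt_succ_sqrt' (k - 1)
    exact_mod_cast (by omega : k ≤ (m + 1) ^ 2)
  have hs_sq : ‖s‖ ^ 2 ≤ 1 + t ^ 2 := by
    rw [Complex.sq_norm, normSq_add_mul_I]
    nlinarith [abs_le.mp hσ]
  have hs : ‖s‖ < m := by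
    have hs_le : ‖s‖ ≤ 1 + |t| := (norm_add_le _ _).trans (by simpa using hσ)
    -- otherwise `(m - 1) ^ 3 ≤ |t| ^ 3 ≤ k ≤ (m + 1) ^ 2`, impossible for `m ≥ 4`
    by_contra! h
    have hmt : (m : ℝ) - 1 ≤ |t| := by linarith
    have := pow_le_pow_left₀ (by linarith) hmt 3
    have hm4' : (0 : ℝ) ≤ m - 4 := by linarith
    nlinarith [mul_nonneg (mul_nonneg hm4' hm4') hm4']
  have hexp : Real.exp (m ^ 2 / ((k - 1 : ℝ) - m)) ≤ Real.exp 2 := by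
    gcongr
    rw [div_le_iff₀ (by nlinarith)]
    nlinarith
  have hbound := norm_gammaShiftRatio_sub_one_le (ν := k - 1) (m := m) (by nlinarith) hs
  push_cast at hbound
  calc ‖gammaShiftRatio ((k : ℂ) - 1) s - 1‖
      ≤ (Real.exp (m ^ 2 / ((k - 1 : ℝ) - m)) + 1) * (‖s‖ / m) ^ 2 := hbound
    _ ≤ (Real.exp 2 + 1) * ((1 + t ^ 2) / m ^ 2) := by
      rw [div_pow]
      gcongr
    _ ≤ (Real.exp 2 + 1) * (4 * (1 + t ^ 2) / k) := by
      gcongr (Real.exp 2 + 1) * ?_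
      rw [div_le_div_iff₀ (by positivity) (by positivity)]
      have hk4 : (k : ℝ) ≤ 4 * m ^ 2 := by nlinarith
      nlinarith [mul_le_mul_of_nonneg_left hk4 (by positivity : (0 : ℝ) ≤ 1 + t ^ 2)]
    _ = 4 * (Real.exp 2 + 1) * (1 + t ^ 2) / k := by ring

theorem exists_bound_norm_gammaShiftRatio_sub_one {σ : ℝ} (hσ : |σ| < 3) (K T : ℝ) :
    ∃ B, ∀ k : ℕ, 4 ≤ k → (k : ℝ) ≤ K → ∀ t : ℝ, |t| ≤ T →
      ‖gammaShiftRatio ((k : ℂ) - 1) (σ + t * I) - 1‖ ≤ B := by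
  have hcont : ContinuousOn (fun p : ℝ × ℝ ↦ gammaShiftRatio ((p.1 : ℂ) - 1) (σ + p.2 * I) - 1)
      (Icc 4 K ×ˢ Icc (-T) T) := by
    refine (continuousOn_gammaShiftRatio.comp (by fun_prop : Continuous fun p : ℝ × ℝ ↦
      ((p.1 : ℂ) - 1, (σ : ℂ) + p.2 * I)).continuousOn ?_).sub continuousOn_const
    rintro p ⟨⟨hp, -⟩, -⟩
    change |((σ : ℂ) + p.2 * I).re| < ((p.1 : ℂ) - 1).re
    simp only [add_re, mul_re, ofReal_re, ofReal_im, I_re, I_im, sub_re, one_re, mul_zero,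
      zero_mul, sub_zero, add_zero]
    linarith
  obtain ⟨B, hB⟩ := (isCompact_Icc.prod isCompact_Icc).exists_bound_of_continuousOn hcont
  exact ⟨B, fun k hk hkK t ht ↦ by
    simpa using hB (k, t) ⟨⟨(by exact_mod_cast hk : (4 : ℝ) ≤ k), hkK⟩, abs_le.mp ht⟩⟩

theorem gamma_ratio_stirling (σ : ℝ) (hσ : σ ∈ Set.Icc (0:ℝ) 1) :
    ∃ C : ℝ, 0 < C ∧ ∀ k : ℕ, 4 ≤ k → ∀ t : ℝ, |t| ≤ (k : ℝ) ^ (1/3 : ℝ) →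
      ‖Complex.Gamma ((k : ℂ) - 1 + (σ + t * Complex.I)) *
          Complex.Gamma ((k : ℂ) - 1 - (σ + t * Complex.I)) /
          Complex.Gamma ((k : ℂ) - 1) ^ 2 - 1‖ ≤ C * (1 + t^2) / k := by
  have hσ₁ : |σ| ≤ 1 := abs_le.mpr ⟨by linarith [hσ.1], hσ.2⟩
  obtain ⟨B, hB⟩ := exists_bound_norm_gammaShiftRatio_sub_one (by linarith : |σ| < 3) 16 3
  refine ⟨16 * |B| + 4 * (Real.exp 2 + 1), by positivity, fun k hk t ht ↦ ?_⟩
  have ht₃ : |t| ^ 3 ≤ k := by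
    calc |t| ^ 3 ≤ ((k : ℝ) ^ (1 / 3 : ℝ)) ^ 3 := pow_le_pow_left₀ (abs_nonneg t) ht 3
      _ = k := by
        rw [one_div, show (3 : ℝ) = (3 : ℕ) by norm_num,
          Real.rpow_inv_natCast_pow k.cast_nonneg three_ne_zero]
  change ‖gammaShiftRatio ((k : ℂ) - 1) (σ + t * I) - 1‖ ≤ _
  rcases le_or_gt k 16 with hk₁₆ | hk₁₆
  · have hkR : (k : ℝ) ≤ 16 := by exact_mod_cast hk₁₆
    have ht' : |t| ≤ 3 := le_of_pow_le_pow_left₀ three_ne_zero (by norm_num) (by linarith)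
    refine (hB k hk hkR t ht').trans ?_
    rw [le_div_iff₀ (by positivity)]
    nlinarith [le_abs_self B, abs_nonneg B, sq_nonneg t, Real.exp_pos 2,
      mul_nonneg (abs_nonneg B) (sq_nonneg t)]
  · refine (norm_gammaShiftRatio_sub_one_le_of_large hk₁₆ hσ₁ ht₃).trans ?_
    gcongr
    linarith [abs_nonneg B]
end
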